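/- arXiv:1402.7294 — 8 statements merged into one kernel-verified Lean document; each statement's English description precedes it below -/
import Mathlib

section
/- Let R be a commutative ring and f: R → S a ring homomorphism. Then f is a ring epimorphism if and only if for every prime ideal p of R, the induced map R_p → S ⊗_R R_p is a ring epimorphism. -/
open CategoryTheory TensorProduct

universe u

/-- `f : R → S` is an epimorphism in the category of rings. -/
def IsRingEpi {R S : Type u} [Ring R] [Ring S] (f : R →+* S) : Prop :=
  ∀ (T : Type u) [Ring T], ∀ g₁ g₂ : S →+* T, g₁.comp f = g₂.comp f → g₁ = g₂

/-- `Tor_i^R(M, N) = 0`. -/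
def TorIsZero (R : Type u) [CommRing R] (i : ℕ)
    (M N : Type u) [AddCommGroup M] [Module R M] [AddCommGroup N] [Module R N] : Prop :=
  Limits.IsZero (((Tor (ModuleCat.{u} R) i).obj (ModuleCat.of R M)).obj (ModuleCat.of R N))

/-- `R` has weak global dimension at most one: `Tor_2^R` vanishes identically. -/
def WeakGlobalDimLE1 (R : Type u) [CommRing R] : Prop :=
  ∀ M N : ModuleCat.{u} R, Limits.IsZero (((Tor (ModuleCat.{u} R) 2).obj M).obj N)

/-- A homological ring epimorphism: a ring epimorphism with `Tor_i^R(S,S) = 0` for `i ≥ 1`. -/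
def IsHomologicalEpi (R S : Type u) [CommRing R] [CommRing S] [Algebra R S] : Prop :=
  IsRingEpi (algebraMap R S) ∧ ∀ i : ℕ, 1 ≤ i → TorIsZero R i S S

/- A map `R → S` is epi iff `s ⊗ 1 - 1 ⊗ s = 0` in `S ⊗[R] S` for all `s`. Under
`A ⊗[R] (S ⊗[R] S) ≃ (A ⊗[R] S) ⊗[A] (A ⊗[R] S)`, the map `s ↦ s ⊗ 1 - 1 ⊗ s` tensored with `A`
becomes the corresponding map for `A → A ⊗[R] S`. Hence epimorphisms are stable under base change,
and conversely the vanishing of `s ⊗ 1 - 1 ⊗ s` can be checked after localizing at every maximal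
ideal. -/

open Algebra.TensorProduct (includeLeftSubRight)

theorem isRingEpi_algebraMap_iff {R S : Type u} [CommRing R] [CommRing S] [Algebra R S] :
    IsRingEpi (algebraMap R S) ↔ Algebra.IsEpi R S := by
  refine ⟨fun h ↦ CommRingCat.epi_iff_epi.mp ⟨fun g₁ g₂ e ↦ ?_⟩, fun h T _ g₁ g₂ e ↦ ?_⟩
  · exact CommRingCat.hom_ext (h _ _ _ congr(($e).hom))
  · let : Module R T := Module.compHom T (g₁.comp (algebraMap R S))
    have e' (r : R) : g₂ (algebraMap R S r) = g₁ (algebraMap R S r) := congr($e.symm r)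
    -- `T` may be noncommutative; bilinearity in `b` uses that `g₁` and `g₂` agree on `R`.
    let φ : S ⊗[R] S →ₗ[R] T := TensorProduct.lift <| LinearMap.mk₂ R (fun a b ↦ g₁ a * g₂ b)
      (fun _ _ _ ↦ by simp only [map_add, add_mul])
      (fun r a b ↦ by rw [Algebra.smul_def, map_mul, mul_assoc]; rfl)
      (fun _ _ _ ↦ by simp only [map_add, mul_add])
      (fun r a b ↦ by
        rw [Algebra.smul_def, map_mul, e', ← mul_assoc, ← map_mul, mul_comm, map_mul, mul_assoc]
        rfl)
    ext s
    simpa [φ] using congr(φ $((Algebra.isEpi_iff_forall_one_tmul_eq R S).mp h s)).symm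

namespace Algebra

section

variable {R S : Type*} [CommSemiring R] [Ring S] [Algebra R S]

theorem isEpi_iff_includeLeftSubRight_eq_zero :
    Algebra.IsEpi R S ↔ includeLeftSubRight R S = 0 := by
  simp only [isEpi_iff_forall_one_tmul_eq, LinearMap.ext_iff,
    TensorProduct.includeLeftSubRight_apply, LinearMap.zero_apply, sub_eq_zero]
  exact forall_congr' fun _ ↦ eq_comm

theorem isEpi_baseChange_iff (A : Type*) [CommRing A] [Algebra R A] :
    Algebra.IsEpi A (A ⊗[R] S) ↔ (includeLeftSubRight R S).lTensor A = 0 := by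
  simp only [isEpi_iff_includeLeftSubRight_eq_zero, LinearMap.ext_iff, LinearMap.zero_apply,
    ← TensorProduct.distribBaseChange_includeLeftSubRight_apply, LinearEquiv.map_eq_zero_iff]

instance IsEpi.baseChange (A : Type*) [CommRing A] [Algebra R A] [Algebra.IsEpi R S] :
    Algebra.IsEpi A (A ⊗[R] S) := by
  rw [isEpi_baseChange_iff, isEpi_iff_includeLeftSubRight_eq_zero.mp ‹_›, LinearMap.lTensor_zero]

end

theorem IsEpi.of_localization_maximal {R S : Type*} [CommRing R] [Ring S] [Algebra R S]
    (h : ∀ (P : Ideal R) [P.IsMaximal],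
      Algebra.IsEpi (Localization.AtPrime P) (Localization.AtPrime P ⊗[R] S)) :
    Algebra.IsEpi R S := by
  refine isEpi_iff_includeLeftSubRight_eq_zero.mpr <| LinearMap.ext fun s ↦
    Module.eq_zero_of_localization_maximal _
      (fun P _ ↦ TensorProduct.mk R (Localization.AtPrime P) (S ⊗[R] S) 1) _ fun P _ ↦ ?_
  simpa using congr($((isEpi_baseChange_iff _).mp (h P)) (1 ⊗ₜ s))

end Algebra

/-- `f : R → S` is a ring epimorphism iff for every prime ideal `p` of `R` the induced
map `R_p → S ⊗_R R_p` is a ring epimorphism. -/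
theorem stmt2 (R S : Type u) [CommRing R] [CommRing S] [Algebra R S] :
    IsRingEpi (algebraMap R S) ↔
      ∀ (p : Ideal R) [p.IsPrime],
        IsRingEpi (algebraMap (Localization.AtPrime p) (Localization.AtPrime p ⊗[R] S)) := by
  simp only [isRingEpi_algebraMap_iff]
  exact ⟨fun _ _ _ ↦ inferInstance, fun h ↦ Algebra.IsEpi.of_localization_maximal fun P _ ↦ h P⟩
end

section
/- If f: R → S is an epimorphism in the category of rings and R is commutative, then S is commutative. -/
/-!
If `c ∈ S` commutes with `f(R)`, then conjugation by the unit `1 + cε` of the trivial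
square-zero extension `S ⊕ Sε` is a ring endomorphism agreeing with the identity on `f(R)`, so
it fixes all of `S`; as `(1 + cε) s (1 - cε) = s + (cs - sc)ε`, `c` is central. Since `R` is
commutative, first every `f r` is central, and then every element of `S` commutes with `f(R)`,
hence is central.
-/

open CategoryTheory TensorProduct

universe u

open TrivSqZeroExt

namespace IsRingEpi

variable {R S : Type u} [Ring R] [Ring S] {f : R →+* S}

theorem commute_of_isUnit {T : Type u} [Ring T] (hf : IsRingEpi f) (g : S →+* T) {u : T}
    (hu : IsUnit u) (hcomm : ∀ r, Commute u (g (f r))) (s : S) : Commute u (g s) := by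
  obtain ⟨u, rfl⟩ := hu
  let conj : T →+* T := MulSemiringAction.toRingHom (ConjAct Tˣ) T (ConjAct.toConjAct u)
  have conj_eq_self_iff (t : T) : conj t = t ↔ Commute (u : T) t := Units.mul_inv_eq_iff_eq_mul u
  have hconj : conj.comp g = g :=
    hf T (conj.comp g) g (RingHom.ext fun r => (conj_eq_self_iff _).2 (hcomm r))
  exact (conj_eq_self_iff (g s)).1 (RingHom.congr_fun hconj s)

theorem commute_of_forall_commute (hf : IsRingEpi f) {c : S} (hc : ∀ r, Commute c (f r))
    (s : S) : Commute c s := by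
  have commute_iff (x : S) :
      Commute (1 + inr c : TrivSqZeroExt S S) (inlHom S S x) ↔ Commute c x := by
    rw [Commute, SemiconjBy, add_mul, mul_add, one_mul, mul_one, add_right_inj, inlHom_apply,
      inr_mul_inl, inl_mul_inr, inr_injective.eq_iff, MulOpposite.smul_eq_mul_unop, smul_eq_mul,
      MulOpposite.unop_op]
    exact Iff.rfl
  exact (commute_iff s).1 (hf.commute_of_isUnit (inlHom S S) (isNilpotent_inr c).isUnit_one_add
    (fun r => (commute_iff (f r)).2 (hc r)) s)

end IsRingEpi

/-- If `f : R → S` is a ring epimorphism and `R` is commutative then `S` is commutative. -/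
theorem stmt3 (R S : Type u) [CommRing R] [Ring S] (f : R →+* S) (hf : IsRingEpi f) :
    ∀ a b : S, a * b = b * a := by
  have f_central (r : R) (s : S) : Commute (f r) s :=
    hf.commute_of_forall_commute (fun r' => (Commute.all r r').map f) s
  intro a b
  exact (hf.commute_of_forall_commute (fun r => (f_central r a).symm) b).eq
end

section
/- Let f: R → S be a homological ring epimorphism (i.e., S ⊗_R S ≅ S via multiplication and Tor_1^R(S,S) = 0, where we assume weak global dimension of R at most 1). Then the essential image of the restriction functor Mod-S → Mod-R is closed under extensions: if 0 → X → Y → Z → 0 is exact in Mod-R with X, Z admitting S-module structures compatible with f, then Y admits such a structure. -/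
open CategoryTheory TensorProduct

universe u

/-- An `R`-module `M` lies in the essential image of restriction of scalars along
`R → S`, i.e. the natural map `M → M ⊗_R S`, `m ↦ m ⊗ 1`, is an isomorphism. -/
def InRestrictionImage (R S : Type u) [CommRing R] [CommRing S] [Algebra R S]
    (M : Type u) [AddCommGroup M] [Module R M] : Prop :=
  Function.Bijective ((TensorProduct.mk R M S).flip 1)

/-!
Tensoring a short exact sequence `0 → X → Y → Z → 0` with `S` leaves `X ⊗ S → Y ⊗ S → Z ⊗ S → 0`
exact, so by the five lemma, applied to the maps `m ↦ m ⊗ 1`, `Y` lies in the image once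
`X ⊗ S → Y ⊗ S` is injective. That holds when `Tor₁(Z, S) = 0`, which we use in the concrete form
of a projective presentation `0 → K → G → Z → 0` with `K ⊗ S → G ⊗ S` injective.

`Tor₁(S, S) = 0` gives such a presentation `B → S` of `S`, and tensoring it with the free module
`R^(Z)` gives one of the free `S`-module `S ⊗ R^(Z)`. Since `S ⊗ S ≅ S`, every `S`-module `M` has
`M ⊗ S ≅ M`, so the kernel of the `S`-linear surjection `S ⊗ R^(Z) → S ⊗ Z ≅ Z` stays a submodule
after tensoring with `S`. Composing the two presentations gives one of `Z`.
-/

section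

variable {R : Type*} [CommRing R] (M : Type*) [AddCommGroup M] [Module R M]
  {P₂ P₁ P₀ : Type*} [AddCommGroup P₂] [Module R P₂] [AddCommGroup P₁] [Module R P₁]
  [AddCommGroup P₀] [Module R P₀]

theorem LinearMap.lTensor_subtype_injective_of_exact {K : Submodule R P₀} (d : P₂ →ₗ[R] P₁)
    (e : P₁ →ₗ[R] K) (he : Function.Surjective e) (hed : e ∘ₗ d = 0)
    (hexact : Function.Exact (d.lTensor M) ((K.subtype ∘ₗ e).lTensor M)) :
    Function.Injective (K.subtype.lTensor M) := by
  refine (injective_iff_map_eq_zero _).2 fun τ hτ => ?_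
  obtain ⟨τ, rfl⟩ := LinearMap.lTensor_surjective M he τ
  obtain ⟨σ, rfl⟩ := (hexact τ).1 (by rwa [LinearMap.lTensor_comp_apply])
  rw [← LinearMap.lTensor_comp_apply, hed, LinearMap.lTensor_zero, LinearMap.zero_apply]

end

theorem exists_projective_presentation_of_torIsZero {R : Type u} [CommRing R]
    {M N : Type u} [AddCommGroup M] [Module R M] [AddCommGroup N] [Module R N]
    (h : TorIsZero R 1 M N) :
    ∃ (B : Type u) (_ : AddCommGroup B) (_ : Module R B) (_ : Module.Projective R B)
      (q : B →ₗ[R] N), Function.Surjective q ∧ Function.Injective (q.ker.subtype.rTensor M) := by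
  let P : ProjectiveResolution (ModuleCat.of R N) := HasProjectiveResolution.out.some
  let F := (MonoidalCategory.tensoringLeft (ModuleCat.{u} R)).obj (ModuleCat.of R M)
  have hexact₁ : ((F.mapHomologicalComplex _).obj P.complex).ExactAt 1 :=
    (HomologicalComplex.exactAt_iff_isZero_homology _ _).2
      (Limits.IsZero.of_iso h (P.isoLeftDerivedObj F 1).symm)
  rw [HomologicalComplex.exactAt_iff' _ 2 1 0 (by simp) (by simp),
    ShortComplex.ShortExact.moduleCat_exact_iff_function_exact] at hexact₁
  let q := (P.π.f 0).hom
  have hq : Function.Surjective q := (ModuleCat.epi_iff_surjective (P.π.f 0)).1 inferInstance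
  have hexact₀ := ShortComplex.exact_of_g_is_cokernel
    (ShortComplex.mk (P.complex.d 1 0) (P.π.f 0) P.complex_d_comp_π_f_zero)
    P.isColimitCokernelCofork
  rw [ShortComplex.moduleCat_exact_iff_range_eq_ker] at hexact₀
  have : Module.Projective R (P.complex.X 0) := by
    simpa [IsProjective.iff_projective] using P.projective 0
  refine ⟨P.complex.X 0, inferInstance, inferInstance, inferInstance, q, hq, ?_⟩
  let e := (P.complex.d 1 0).hom.codRestrict q.ker fun x => by rw [← hexact₀]; exact ⟨x, rfl⟩
  have he : Function.Surjective e := fun ⟨y, hy⟩ => by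
    rw [← hexact₀] at hy
    obtain ⟨x, rfl⟩ := hy
    exact ⟨x, rfl⟩
  have hed : e ∘ₗ (P.complex.d 2 1).hom = 0 := by
    ext x; exact congr($(P.complex.d_comp_d 2 1 0) x)
  exact (LinearMap.lTensor_inj_iff_rTensor_inj _ _).1
    (LinearMap.lTensor_subtype_injective_of_exact _ _ e he hed hexact₁)

section

variable {R : Type*} [CommRing R] {X Y Z G : Type*} [AddCommGroup X] [Module R X]
  [AddCommGroup Y] [Module R Y] [AddCommGroup Z] [Module R Z] [AddCommGroup G] [Module R G]

/-- `Y` is the pushout of `G ← ker (p ∘ g) → X`. -/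
theorem Function.Exact.subtype_prod_neg_coprod {i : X →ₗ[R] Y} {p : Y →ₗ[R] Z}
    (hi : Function.Injective i) (hip : Function.Exact i p) (g : G →ₗ[R] Y)
    (μ : (p ∘ₗ g).ker →ₗ[R] X) (hμ : i ∘ₗ μ = g ∘ₗ (p ∘ₗ g).ker.subtype) :
    Function.Exact ((p ∘ₗ g).ker.subtype.prod (-μ)) (g.coprod i) := by
  rintro ⟨a, x⟩
  constructor
  · intro h
    have hpa : p (g a) = 0 := by
      simpa [hip.apply_apply_eq_zero] using congr(p $h)
    refine ⟨⟨a, hpa⟩, Prod.ext rfl ?_⟩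
    apply hi
    have := congr($hμ ⟨a, hpa⟩)
    simp only [LinearMap.coprod_apply] at h
    simp only [LinearMap.comp_apply] at this
    simp [this, eq_neg_of_add_eq_zero_right h]
  · rintro ⟨m, hm⟩
    rw [← hm]
    have := congr($hμ m)
    simp only [LinearMap.comp_apply] at this
    simp [this]

theorem LinearMap.rTensor_injective_of_projective_presentation (N : Type*) [AddCommGroup N]
    [Module R N] [Module.Projective R G] {i : X →ₗ[R] Y} {p : Y →ₗ[R] Z}
    (hi : Function.Injective i) (hp : Function.Surjective p) (hip : Function.Exact i p)
    {q : G →ₗ[R] Z} (hq : Function.Surjective q)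
    (hker : Function.Injective (q.ker.subtype.rTensor N)) :
    Function.Injective (i.rTensor N) := by
  obtain ⟨g, rfl⟩ := Module.projective_lifting_property p q hp
  set K := (p ∘ₗ g).ker
  have hgK : ∀ m : K, g m ∈ i.range := fun m => (hip _).1 m.2
  let μ : K →ₗ[R] X := (LinearEquiv.ofInjective i hi).symm ∘ₗ (g ∘ₗ K.subtype).codRestrict _ hgK
  have hμ : i ∘ₗ μ = g ∘ₗ K.subtype := by
    ext m; exact LinearEquiv.ofInjective_symm_apply (h := hi) _ _
  have hexact := rTensor_exact N (hip.subtype_prod_neg_coprod hi g μ hμ) (by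
    intro y
    obtain ⟨a, ha⟩ := hq (p y)
    obtain ⟨x, hx⟩ := (hip (y - g a)).1 (by simpa [sub_eq_zero] using ha.symm)
    exact ⟨(a, x), by simp [hx]⟩)
  refine (injective_iff_map_eq_zero _).2 fun ξ hξ => ?_
  obtain ⟨τ, hτ⟩ := (hexact ((inr R G X).rTensor N ξ)).1 (by
    rwa [← rTensor_comp_apply, coprod_inr])
  have hτ0 : τ = 0 := hker <| by
    rw [map_zero, ← fst_prod K.subtype (-μ), rTensor_comp_apply, hτ, ← rTensor_comp_apply,
      fst_comp_inr, rTensor_zero, zero_apply]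
  rw [← rTensor_id_apply N X ξ, ← snd_comp_inr R G X, rTensor_comp_apply, ← hτ, hτ0,
    map_zero, map_zero]

end

section

variable {R : Type*} [CommRing R] (N : Type*) [AddCommGroup N] [Module R N]
  {A B Z P : Type*} [AddCommGroup A] [Module R A] [AddCommGroup B] [Module R B]
  [AddCommGroup Z] [Module R Z] [AddCommGroup P] [Module R P]

theorem LinearMap.rTensor_rTensor_comp_rightComm (f : A →ₗ[R] B) :
    (f.rTensor P).rTensor N ∘ₗ TensorProduct.rightComm R A N P =
      TensorProduct.rightComm R B N P ∘ₗ (f.rTensor N).rTensor P :=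
  TensorProduct.ext_threefold fun _ _ _ => rfl

theorem rTensor_subtype_ker_rTensor_injective [Module.Flat R P] {q : B →ₗ[R] Z}
    (hq : Function.Surjective q) (hker : Function.Injective (q.ker.subtype.rTensor N)) :
    Function.Injective ((q.rTensor P).ker.subtype.rTensor N) := by
  have hexact := rTensor_exact P (LinearMap.exact_subtype_ker_map q) hq
  let u := (q.ker.subtype.rTensor P).codRestrict (q.rTensor P).ker
    fun x => (hexact _).2 ⟨x, rfl⟩
  have hu : Function.Surjective u := fun ⟨y, hy⟩ => by
    obtain ⟨x, rfl⟩ := (hexact y).1 hy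
    exact ⟨x, rfl⟩
  refine Function.Injective.of_comp_right (g := u.rTensor N) ?_ (LinearMap.rTensor_surjective N hu)
  rw [← LinearMap.coe_comp, ← LinearMap.rTensor_comp]
  change Function.Injective ((q.ker.subtype.rTensor P).rTensor N)
  have := LinearMap.rTensor_rTensor_comp_rightComm N (P := P) q.ker.subtype
  rw [← LinearEquiv.eq_comp_toLinearMap_symm] at this
  rw [this]
  simpa using Module.Flat.rTensor_preserves_injective_linearMap _ hker

theorem rTensor_subtype_ker_comp_injective {F : Type*} [AddCommGroup F] [Module R F]
    {q₁ : B →ₗ[R] F} {q₂ : F →ₗ[R] Z} (hq₁ : Function.Surjective q₁)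
    (h₁ : Function.Injective (q₁.ker.subtype.rTensor N))
    (h₂ : Function.Injective (q₂.ker.subtype.rTensor N)) :
    Function.Injective ((q₂ ∘ₗ q₁).ker.subtype.rTensor N) := by
  set K := (q₂ ∘ₗ q₁).ker
  let ι := Submodule.inclusion (LinearMap.ker_le_ker_comp q₁ q₂)
  let r : K →ₗ[R] q₂.ker := q₁.restrict fun _ hx => hx
  have hr : Function.Surjective r := fun ⟨y, hy⟩ => by
    obtain ⟨x, rfl⟩ := hq₁ y
    exact ⟨⟨x, hy⟩, rfl⟩
  have hexact : Function.Exact ι r := fun x => by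
    refine ⟨fun h => ⟨⟨x, congr(Subtype.val $h)⟩, rfl⟩, ?_⟩
    rintro ⟨⟨y, hy⟩, rfl⟩
    exact Subtype.ext hy
  refine (injective_iff_map_eq_zero _).2 fun τ hτ => ?_
  obtain ⟨σ, rfl⟩ := (rTensor_exact N hexact hr τ).1 <| h₂ <| by
    rw [map_zero, ← LinearMap.rTensor_comp_apply]
    change (q₁ ∘ₗ K.subtype).rTensor N τ = 0
    rw [LinearMap.rTensor_comp_apply, hτ, map_zero]
  have : K.subtype ∘ₗ ι = q₁.ker.subtype := rfl
  rw [← LinearMap.rTensor_comp_apply, this] at hτ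
  rw [h₁ (hτ.trans (map_zero _).symm), map_zero]

end

section

variable {R S : Type u} [CommRing R] [CommRing S] [Algebra R S]

theorem inRestrictionImage_of_module [Algebra.IsEpi R S] (M : Type u) [AddCommGroup M]
    [Module R M] [Module S M] [IsScalarTower R S M] : InRestrictionImage R S M := by
  have : ⇑((TensorProduct.mk R M S).flip 1) =
      TensorProduct.comm R S M ∘ (TensorProduct.lid' R S M).symm := by
    ext m; simp
  rw [InRestrictionImage, this]
  exact (TensorProduct.comm R S M).bijective.comp (TensorProduct.lid' R S M).symm.bijective

theorem LinearMap.rTensor_injective_of_inRestrictionImage {M N : Type u} [AddCommGroup M]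
    [Module R M] [AddCommGroup N] [Module R N] (hM : InRestrictionImage R S M)
    (hN : InRestrictionImage R S N) {f : M →ₗ[R] N} (hf : Function.Injective f) :
    Function.Injective (f.rTensor S) :=
  Function.Injective.of_comp_right (f := f.rTensor S) (g := (TensorProduct.mk R M S).flip 1)
    (hN.1.comp hf) hM.2

theorem rTensor_subtype_ker_injective_of_isEpi [Algebra.IsEpi R S] {F Z : Type u}
    [AddCommGroup F] [Module S F] [Module R F] [IsScalarTower R S F]
    [AddCommGroup Z] [Module S Z] [Module R Z] [IsScalarTower R S Z] (π : F →ₗ[S] Z) :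
    Function.Injective ((π.ker.restrictScalars R).subtype.rTensor S) :=
  LinearMap.rTensor_injective_of_inRestrictionImage (inRestrictionImage_of_module _)
    (inRestrictionImage_of_module F) Subtype.val_injective

theorem exists_projective_presentation_of_inRestrictionImage [Algebra.IsEpi R S] {B : Type u}
    [AddCommGroup B] [Module R B] [Module.Projective R B] {qB : B →ₗ[R] S}
    (hqB : Function.Surjective qB) (hB : Function.Injective (qB.ker.subtype.rTensor S))
    {Z : Type u} [AddCommGroup Z] [Module R Z] (hZ : InRestrictionImage R S Z) :
    ∃ (G : Type u) (_ : AddCommGroup G) (_ : Module R G) (_ : Module.Projective R G)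
      (q : G →ₗ[R] Z), Function.Surjective q ∧ Function.Injective (q.ker.subtype.rTensor S) := by
  let p := Finsupp.linearCombination R (id : Z → Z)
  have hp : Function.Surjective p := fun z => ⟨Finsupp.single z 1, by simp [p]⟩
  let e : S ⊗[R] Z ≃ₗ[R] Z :=
    (TensorProduct.comm R S Z).trans (LinearEquiv.ofBijective _ hZ).symm
  let q₂ := e.toLinearMap ∘ₗ (p.baseChange S).restrictScalars R
  have hq₂ : Function.Injective (q₂.ker.subtype.rTensor S) := by
    rw [LinearEquiv.ker_comp, LinearMap.ker_restrictScalars]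
    exact rTensor_subtype_ker_injective_of_isEpi _
  refine ⟨B ⊗[R] (Z →₀ R), inferInstance, inferInstance, inferInstance, q₂ ∘ₗ qB.rTensor _,
    e.surjective.comp ((LinearMap.lTensor_surjective S hp).comp
      (LinearMap.rTensor_surjective _ hqB)),
    rTensor_subtype_ker_comp_injective S (LinearMap.rTensor_surjective _ hqB)
      (rTensor_subtype_ker_rTensor_injective S hqB hB) hq₂⟩

theorem inRestrictionImage_of_exact {X Y Z : Type u} [AddCommGroup X] [Module R X]
    [AddCommGroup Y] [Module R Y] [AddCommGroup Z] [Module R Z] {i : X →ₗ[R] Y}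
    {p : Y →ₗ[R] Z} (hi : Function.Injective i) (hp : Function.Surjective p)
    (hip : Function.Exact i p) (hiS : Function.Injective (i.rTensor S))
    (hX : InRestrictionImage R S X) (hZ : InRestrictionImage R S Z) :
    InRestrictionImage R S Y :=
  LinearMap.bijective_of_surjective_of_bijective_of_bijective_of_injective
    (0 : Unit →ₗ[R] X) i p (0 : Z →ₗ[R] Unit) (0 : Unit →ₗ[R] X ⊗[R] S) (i.rTensor S)
    (p.rTensor S) (0 : Z ⊗[R] S →ₗ[R] Unit) 0 _ _ _ 0 (by simp) rfl rfl (by simp)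
    ((LinearMap.exact_zero_iff_injective _ _).2 hi) hip
    ((LinearMap.exact_zero_iff_surjective _ _).2 hp)
    ((LinearMap.exact_zero_iff_injective _ _).2 hiS) (rTensor_exact S hip hp)
    ((LinearMap.exact_zero_iff_surjective _ _).2 (LinearMap.rTensor_surjective S hp))
    (Function.surjective_to_subsingleton _) hX hZ (Function.injective_of_subsingleton _)

end

theorem stmt8_general (R S : Type u) [CommRing R] [CommRing S] [Algebra R S]
    (hmul : Function.Bijective (LinearMap.mul' R S))
    (htor : TorIsZero R 1 S S) :
    ∀ (X Y Z : Type u) [AddCommGroup X] [Module R X] [AddCommGroup Y] [Module R Y]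
        [AddCommGroup Z] [Module R Z] (i : X →ₗ[R] Y) (p : Y →ₗ[R] Z),
        Function.Injective i → Function.Surjective p → LinearMap.range i = LinearMap.ker p →
        InRestrictionImage R S X → InRestrictionImage R S Z → InRestrictionImage R S Y := by
  intro X Y Z _ _ _ _ _ _ i p hi hp hrange hX hZ
  have : Algebra.IsEpi R S := ⟨hmul.1⟩
  have hip : Function.Exact i p := LinearMap.exact_iff.2 hrange.symm
  obtain ⟨B, _, _, _, qB, hqB, hB⟩ := exists_projective_presentation_of_torIsZero htor
  obtain ⟨G, _, _, _, q, hq, hG⟩ := exists_projective_presentation_of_inRestrictionImage hqB hB hZ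
  exact inRestrictionImage_of_exact hi hp hip
    (LinearMap.rTensor_injective_of_projective_presentation S hi hp hip hq hG) hX hZ

/-- If `R` has weak global dimension at most one and `R → S` is a homological ring
epimorphism (multiplication `S ⊗_R S → S` bijective and `Tor_1^R(S,S) = 0`), then the
essential image of restriction of scalars along `R → S` is closed under extensions. -/
theorem stmt8 (R S : Type u) [CommRing R] [CommRing S] [Algebra R S]
    (hR : WeakGlobalDimLE1 R)
    (hmul : Function.Bijective (LinearMap.mul' R S))
    (htor : TorIsZero R 1 S S) :
    ∀ (X Y Z : Type u) [AddCommGroup X] [Module R X] [AddCommGroup Y] [Module R Y]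
        [AddCommGroup Z] [Module R Z] (i : X →ₗ[R] Y) (p : Y →ₗ[R] Z),
        Function.Injective i → Function.Surjective p → LinearMap.range i = LinearMap.ker p →
        InRestrictionImage R S X → InRestrictionImage R S Z → InRestrictionImage R S Y :=
  stmt8_general R S hmul htor
end

section
/- Let R be a valuation domain and S a set of prime ideals of R which has no maximal element with respect to inclusion. Then the union ⋃S is an idempotent prime ideal of R. -/
universe u

/-- In a valuation domain, the union of a set of prime ideals with no maximal element
is an idempotent prime ideal. -/
theorem stmt9 (R : Type u) [CommRing R] [IsDomain R] [ValuationRing R]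
    (S : Set (Ideal R)) (hne : S.Nonempty) (hprime : ∀ p ∈ S, p.IsPrime)
    (hnomax : ∀ p ∈ S, ∃ q ∈ S, p < q) :
    ∃ I : Ideal R, ((I : Set R) = ⋃ p ∈ S, (p : Set R)) ∧ I.IsPrime ∧ I ^ 2 = I := by
  have hdir : DirectedOn (· ≤ ·) S := by
    intro p hp q hq
    rcases Std.Total.total (r := (· ≤ · : Ideal R → Ideal R → Prop)) p q with h | h
    · exact ⟨q, hq, h, le_rfl⟩
    · exact ⟨p, hp, le_rfl, h⟩
  have hmem : ∀ x : R, x ∈ sSup S ↔ ∃ p ∈ S, x ∈ p := fun x =>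
    Submodule.mem_sSup_of_directed hne hdir
  refine ⟨sSup S, ?_, ?_, ?_⟩
  · ext x
    simp only [SetLike.mem_coe, Set.mem_iUnion, hmem x]
    exact exists_congr fun p => exists_prop.symm
  · constructor
    · intro h
      have : (1 : R) ∈ sSup S := h ▸ Submodule.mem_top
      obtain ⟨p, hp, h1⟩ := (hmem 1).mp this
      exact (hprime p hp).ne_top ((Ideal.eq_top_iff_one p).mpr h1)
    · intro x y hxy
      obtain ⟨p, hp, hxyp⟩ := (hmem _).mp hxy
      rcases (hprime p hp).mem_or_mem hxyp with h | h
      · exact Or.inl ((hmem x).mpr ⟨p, hp, h⟩)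
      · exact Or.inr ((hmem y).mpr ⟨p, hp, h⟩)
  · refine le_antisymm ?_ ?_
    · rw [sq]
      exact Ideal.mul_le_left
    · intro x hx
      obtain ⟨p, hp, hxp⟩ := (hmem x).mp hx
      obtain ⟨q, hq, hpq⟩ := hnomax p hp
      obtain ⟨y, hyq, hyp⟩ := SetLike.exists_of_lt hpq
      have hqI : q ≤ sSup S := le_sSup hq
      obtain ⟨c, hc⟩ := ValuationRing.cond x (y * y)
      rcases hc with h | h
      · exfalso
        have : y * y ∈ p := h ▸ Ideal.mul_mem_right c p hxp
        exact hyp (((hprime p hp).mem_or_mem this).elim id id)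
      · rw [sq, ← h]
        have := Ideal.mul_mem_mul (hqI hyq) (Ideal.mul_mem_right c _ (hqI hyq))
        rwa [← mul_assoc] at this
end

section
/- Let R be a valuation domain and f: R → S a flat ring epimorphism with S ≠ 0. Then f is injective and there is a prime ideal p of R and a ring isomorphism φ: S → R_p such that φ ∘ f is the canonical localization map R → R_p. -/
/-!
Base change along `R → K = Frac R` turns the epimorphism into an epimorphism `K → K ⊗[R] S`,
which is nonzero because `S` is flat (so `S ↪ K ⊗[R] S`). Out of a field a nonzero epimorphism
is an isomorphism: a `K`-linear functional `l` with `l 1 = 1`, applied to `s ⊗ 1 = 1 ⊗ s`,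
shows `1 ⊗ s = l (1 ⊗ s) • 1`. Hence `S` embeds into `K` over `R`. Since `R` is a valuation
domain, every element of `K` is in `R` or is the inverse of an element of `R`, so `S` is the
localization of `R` at the elements that become units in `S`. The remaining elements form an
ideal because divisibility in `R` is total, and this ideal is prime.
-/

open TensorProduct

universe u

namespace Algebra.IsEpi

variable {R S : Type*} [CommRing R] [CommRing S] [Algebra R S] [Algebra.IsEpi R S]

theorem apply_one_tmul_tmul_one {K : Type*} [CommRing K] [Algebra R K]
    (l : K ⊗[R] S →ₗ[K] K) (s : S) : l (1 ⊗ₜ s) ⊗ₜ[R] (1 : S) = l 1 ⊗ₜ s := by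
  let g : S →ₗ[R] K := l.restrictScalars R ∘ₗ
    (Algebra.TensorProduct.includeRight (R := R) (A := K) (B := S)).toLinearMap
  have h := congrArg (_root_.TensorProduct.map g (LinearMap.id : S →ₗ[R] S))
    (tmul_comm R s (1 : S))
  rwa [map_tmul, map_tmul, LinearMap.id_apply, LinearMap.id_apply] at h

theorem bijective_algebraMap_baseChange {K : Type*} [Field K] [Algebra R K]
    [Nontrivial (K ⊗[R] S)] : Function.Bijective (algebraMap K (K ⊗[R] S)) := by
  refine ⟨(algebraMap K _).injective, fun x ↦ ?_⟩
  obtain ⟨l, hl⟩ := Module.Projective.exists_dual_eq_one K (one_ne_zero (α := K ⊗[R] S))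
  have one_tmul_mem (s : S) : algebraMap K _ (l ((1 : K) ⊗ₜ s)) = (1 : K) ⊗ₜ[R] s := by
    rw [Algebra.TensorProduct.algebraMap_apply, Algebra.algebraMap_self_apply,
      apply_one_tmul_tmul_one, hl]
  induction x using TensorProduct.induction_on with
  | zero => exact ⟨0, map_zero _⟩
  | tmul k s =>
    refine ⟨k * l (1 ⊗ₜ s), ?_⟩
    rw [map_mul, one_tmul_mem, Algebra.TensorProduct.algebraMap_apply,
      Algebra.TensorProduct.tmul_mul_tmul, Algebra.algebraMap_self_apply, mul_one, one_mul]
  | add x y hx hy =>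
    obtain ⟨a, rfl⟩ := hx
    obtain ⟨b, rfl⟩ := hy
    exact ⟨a + b, map_add _ a b⟩

theorem exists_algHom_injective_of_isFractionRing [Module.Flat R S] [Nontrivial S]
    (K : Type*) [Field K] [Algebra R K] [IsFractionRing R K] :
    ∃ g : S →ₐ[R] K, Function.Injective g := by
  have hS : Function.Injective (Algebra.TensorProduct.includeRight : S →ₐ[R] K ⊗[R] S) :=
    Algebra.TensorProduct.includeRight_injective (IsFractionRing.injective R K)
  have := hS.nontrivial
  let e := AlgEquiv.ofBijective (Algebra.ofId K (K ⊗[R] S)) bijective_algebraMap_baseChange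
  exact ⟨(e.symm.restrictScalars R).toAlgHom.comp Algebra.TensorProduct.includeRight,
    e.symm.injective.comp hS⟩

end Algebra.IsEpi

namespace PreValuationRing

variable {R S : Type*} [CommRing R] [PreValuationRing R] [CommRing S] [Nontrivial S]

def comapNonunits (f : R →+* S) : Ideal R where
  carrier := f ⁻¹' nonunits S
  zero_mem' := by simp
  add_mem' {a b} ha hb hab := by
    obtain ⟨c, rfl | rfl⟩ := cond a b
    · rw [← mul_one_add, map_mul] at hab
      exact ha (isUnit_of_mul_isUnit_left hab)
    · rw [add_comm, ← mul_one_add, map_mul] at hab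
      exact hb (isUnit_of_mul_isUnit_left hab)
  smul_mem' a b hb hab := hb (isUnit_of_mul_isUnit_right (by rwa [← map_mul]))

theorem mem_comapNonunits {f : R →+* S} {r : R} : r ∈ comapNonunits f ↔ ¬IsUnit (f r) :=
  Iff.rfl

instance isPrime_comapNonunits (f : R →+* S) : (comapNonunits f).IsPrime where
  ne_top' := (Ideal.ne_top_iff_one _).mpr (by simp [mem_comapNonunits])
  mem_or_mem' {a b} := by
    simp only [mem_comapNonunits, map_mul, IsUnit.mul_iff]
    tauto

theorem mem_primeCompl_comapNonunits {f : R →+* S} {r : R} :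
    r ∈ (comapNonunits f).primeCompl ↔ IsUnit (f r) := not_not

theorem isLocalization_primeCompl_comapNonunits [Algebra R S]
    (hinj : Function.Injective (algebraMap R S))
    (h : ∀ z : S, ∃ d : R, algebraMap R S d = z ∨ z * algebraMap R S d = 1) :
    IsLocalization (comapNonunits (algebraMap R S)).primeCompl S := by
  refine (isLocalization_iff _ _).mpr ⟨fun d ↦ mem_primeCompl_comapNonunits.mp d.2,
    fun z ↦ ?_, fun hxy ↦ ⟨1, by rw [hinj hxy]⟩⟩
  obtain ⟨d, rfl | hd⟩ := h z
  · exact ⟨(d, 1), by simp⟩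
  · exact ⟨(1, ⟨d, mem_primeCompl_comapNonunits.mpr (.of_mul_eq_one_right _ hd)⟩),
      by simpa using hd⟩

end PreValuationRing

namespace ValuationRing

variable {R S K : Type*} [CommRing R] [IsDomain R] [ValuationRing R] [CommRing S] [Algebra R S]
  [Field K] [Algebra R K] [IsFractionRing R K]

theorem exists_algebraMap_eq_or_mul_algebraMap_eq_one {g : S →ₐ[R] K}
    (hg : Function.Injective g) (z : S) :
    ∃ d : R, algebraMap R S d = z ∨ z * algebraMap R S d = 1 := by
  obtain ⟨a, c, hc, hz⟩ := IsFractionRing.div_surjective R (g z)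
  have hc' : algebraMap R K c ≠ 0 := IsFractionRing.to_map_ne_zero_of_mem_nonZeroDivisors hc
  obtain ⟨d, rfl | rfl⟩ := PreValuationRing.cond a c
  · refine ⟨d, Or.inr (hg ?_)⟩
    rw [map_mul, AlgHom.commutes, ← hz, map_one, div_mul_eq_mul_div, ← map_mul, div_self hc']
  · refine ⟨d, Or.inl (hg ?_)⟩
    rw [AlgHom.commutes, ← hz, map_mul, mul_div_cancel_left₀ _ hc']

end ValuationRing

/-- A nonzero flat ring epimorphism out of a valuation domain is injective and is
equivalent to a localization `R → R_p` at a prime ideal `p`. -/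
theorem stmt10 (R S : Type u) [CommRing R] [IsDomain R] [ValuationRing R]
    [CommRing S] [Nontrivial S] [Algebra R S]
    (hflat : Module.Flat R S)
    (hepi : Function.Bijective (LinearMap.mul' R S)) :
    Function.Injective (algebraMap R S) ∧
      ∃ (p : Ideal R) (hp : p.IsPrime),
        ∃ φ : S ≃+* Localization (p.primeCompl (hp := hp)),
          ∀ r : R, φ (algebraMap R S r) =
            algebraMap R (Localization (p.primeCompl (hp := hp))) r := by
  have : Algebra.IsEpi R S := ⟨hepi.injective⟩
  obtain ⟨g, hg⟩ :=
    Algebra.IsEpi.exists_algHom_injective_of_isFractionRing (R := R) (S := S) (FractionRing R)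
  have hinj : Function.Injective (algebraMap R S) := fun x y h ↦
    IsFractionRing.injective R (FractionRing R) (by rw [← g.commutes, ← g.commutes, h])
  have := PreValuationRing.isLocalization_primeCompl_comapNonunits hinj
    (ValuationRing.exists_algebraMap_eq_or_mul_algebraMap_eq_one hg)
  let p := PreValuationRing.comapNonunits (algebraMap R S)
  let φ := IsLocalization.algEquiv p.primeCompl S (Localization p.primeCompl)
  exact ⟨hinj, p, inferInstance, φ.toRingEquiv, φ.commutes⟩
end

section
/- Let f: R → S be a ring homomorphism and s ∈ S. Suppose there exist natural numbers m, n ≥ 1 and matrices X ∈ M_{1×m}(S), Y ∈ M_{m×n}(R), Z ∈ M_{n×1}(S) such that s = X·f(Y)·Z, all entries of X·f(Y) lie in the image of f, and all entries of f(Y)·Z lie in the image of f. Then s lies in the dominion of f: for every pair of ring homomorphisms g₁, g₂: S → T with g₁f = g₂f, one has g₁(s) = g₂(s). -/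
universe u

/-- Easy direction of the Isbell–Mazet–Silver zig-zag theorem: an element of `S` admitting
a zig-zag presentation over `R` lies in the dominion of `f : R → S`. -/
theorem stmt15 {R S : Type u} [Ring R] [Ring S] (f : R →+* S) (s : S)
    (m n : ℕ) (hm : 1 ≤ m) (hn : 1 ≤ n)
    (X : Matrix (Fin 1) (Fin m) S) (Y : Matrix (Fin m) (Fin n) R) (Z : Matrix (Fin n) (Fin 1) S)
    (hs : (X * Y.map f * Z) 0 0 = s)
    (hXY : ∀ i j, (X * Y.map f) i j ∈ Set.range f)
    (hYZ : ∀ i j, (Y.map f * Z) i j ∈ Set.range f) :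
    ∀ (T : Type u) [Ring T] (g₁ g₂ : S →+* T), g₁.comp f = g₂.comp f → g₁ s = g₂ s := by
  intro T _ g₁ g₂ h
  have hfg : ∀ r : R, g₁ (f r) = g₂ (f r) := fun r => RingHom.congr_fun h r
  have h1 : (X * Y.map f).map g₁ = (X * Y.map f).map g₂ := by
    ext i j
    obtain ⟨r, hr⟩ := hXY i j
    simp [Matrix.map_apply, ← hr, hfg]
  have h2 : (Y.map f * Z).map g₁ = (Y.map f * Z).map g₂ := by
    ext i j
    obtain ⟨r, hr⟩ := hYZ i j
    simp [Matrix.map_apply, ← hr, hfg]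
  have key : (X * Y.map f * Z).map g₁ = (X * Y.map f * Z).map g₂ := by
    calc (X * Y.map f * Z).map g₁
        = (X * Y.map f).map g₁ * Z.map g₁ := Matrix.map_mul
      _ = (X * Y.map f).map g₂ * Z.map g₁ := by rw [h1]
      _ = X.map g₂ * (Y.map f).map g₂ * Z.map g₁ := by rw [Matrix.map_mul (f := g₂)]
      _ = X.map g₂ * (Y.map f).map g₁ * Z.map g₁ := by
          congr 2
          ext i j
          simp [Matrix.map_apply, hfg]
      _ = X.map g₂ * ((Y.map f).map g₁ * Z.map g₁) := Matrix.mul_assoc _ _ _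
      _ = X.map g₂ * (Y.map f * Z).map g₁ := by rw [← Matrix.map_mul]
      _ = X.map g₂ * (Y.map f * Z).map g₂ := by rw [h2]
      _ = X.map g₂ * ((Y.map f).map g₂ * Z.map g₂) := by rw [Matrix.map_mul]
      _ = X.map g₂ * (Y.map f).map g₂ * Z.map g₂ := (Matrix.mul_assoc _ _ _).symm
      _ = (X * Y.map f).map g₂ * Z.map g₂ := by rw [← Matrix.map_mul]
      _ = (X * Y.map f * Z).map g₂ := (Matrix.map_mul).symm
  have := congrFun (congrFun key 0) 0
  simpa [Matrix.map_apply, hs] using this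
end

section
/- Let R be a valuation domain, and let p₁ ⊆ p₂ ⊆ p₁' ⊆ p₂' be prime ideals of R. Then the square of canonical ring homomorphisms from R_{p₂'}/p₁ to R_{p₁'}/p₁, R_{p₂'}/p₂, and with both latter mapping to R_{p₁'}/p₂, is a pullback square of rings: given r₁ ∈ R_{p₁'}/p₁ and r₂ ∈ R_{p₂'}/p₂ with equal images in R_{p₁'}/p₂, there is a unique r ∈ R_{p₂'}/p₁ mapping to r₁ and r₂ respectively. -/
/-!
In a valuation domain every `s ∉ p` divides every element of the prime `p`, so the extension
`p R_q` of `p` to a localization with `p ⊆ q` consists of the images of elements of `p`. Hence two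
compatible elements `y₁ ∈ R_{p₁'}` and `x₂ ∈ R_{p₂'}` differ by the image of some `b ∈ p₂`, and
`x₂ + b` is the required common lift. Uniqueness holds over any commutative ring: since
`p R_q ∩ R = p` for primes `p ⊆ q`, an element `r / s` of `R_q` lies in `p R_q` iff `r ∈ p`, which
does not depend on `q ⊇ p`, so `R_{p₂'}/p₁ → R_{p₁'}/p₁` is injective.
-/

universe u

variable (R : Type u) [CommRing R]

/-- The canonical map between localizations `R_q → R_q'` for primes `q' ≤ q`. -/
noncomputable def locMap (q q' : Ideal R) [q.IsPrime] [q'.IsPrime] (hq : q' ≤ q) :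
    Localization.AtPrime q →+* Localization.AtPrime q' :=
  IsLocalization.map (M := q.primeCompl) (T := q'.primeCompl) (Localization.AtPrime q')
    (RingHom.id R) (fun x hx h => hx (hq h))

/-- The canonical map `R_q/p → R_{q'}/p'` for primes `p ≤ p'` and `q' ≤ q`. -/
noncomputable def vmap (p p' q q' : Ideal R) [q.IsPrime] [q'.IsPrime]
    (hq : q' ≤ q) (hp : p ≤ p') :
    (Localization.AtPrime q ⧸ p.map (algebraMap R (Localization.AtPrime q))) →+*
      (Localization.AtPrime q' ⧸ p'.map (algebraMap R (Localization.AtPrime q'))) :=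
  Ideal.Quotient.lift _
    ((Ideal.Quotient.mk (p'.map (algebraMap R (Localization.AtPrime q')))).comp
      (locMap R q q' hq))
    (fun a ha => by
      have hle : p.map (algebraMap R (Localization.AtPrime q)) ≤
          RingHom.ker ((Ideal.Quotient.mk
              (p'.map (algebraMap R (Localization.AtPrime q')))).comp (locMap R q q' hq)) := by
        rw [Ideal.map_le_iff_le_comap]
        intro x hx
        rw [Ideal.mem_comap, RingHom.mem_ker, RingHom.comp_apply]
        have hx' : locMap R q q' hq (algebraMap R (Localization.AtPrime q) x) =
            algebraMap R (Localization.AtPrime q') x := by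
          simp only [locMap]; exact IsLocalization.map_eq _ _
        rw [hx']
        exact Ideal.Quotient.eq_zero_iff_mem.mpr (Ideal.mem_map_of_mem _ (hp hx))
      exact hle ha)

section General

variable {R}

theorem Ideal.disjoint_primeCompl_of_le {p q : Ideal R} [q.IsPrime] (h : p ≤ q) :
    Disjoint (q.primeCompl : Set R) p :=
  Set.disjoint_left.mpr fun _ hq hp => hq (h hp)

theorem ValuationRing.exists_mul_eq_of_mem_of_notMem [PreValuationRing R] {p : Ideal R}
    [p.IsPrime] {b s : R} (hb : b ∈ p) (hs : s ∉ p) : ∃ c ∈ p, s * c = b := by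
  obtain ⟨c, rfl⟩ | ⟨c, rfl⟩ := ValuationRing.dvd_total s b
  · exact ⟨c, (Ideal.IsPrime.mem_or_mem ‹_› hb).resolve_left hs, rfl⟩
  · exact absurd (p.mul_mem_right c hb) hs

theorem ValuationRing.exists_algebraMap_eq_of_mem_map [PreValuationRing R]
    {M : Submonoid R} {S : Type*} [CommRing S] [Algebra R S] [IsLocalization M S]
    {p : Ideal R} [p.IsPrime] (hM : Disjoint (M : Set R) p) {x : S}
    (hx : x ∈ p.map (algebraMap R S)) : ∃ b ∈ p, algebraMap R S b = x := by
  obtain ⟨⟨⟨a, ha⟩, m⟩, hxm⟩ := (IsLocalization.mem_map_algebraMap_iff M S).mp hx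
  obtain ⟨c, hc, rfl⟩ :=
    exists_mul_eq_of_mem_of_notMem ha (Set.disjoint_left.mp hM m.2)
  refine ⟨c, hc, (IsLocalization.map_units S m).mul_right_cancel ?_⟩
  rw [hxm, map_mul, mul_comm]

end General

theorem locMap_algebraMap (q q' : Ideal R) [q.IsPrime] [q'.IsPrime] (hq : q' ≤ q) (r : R) :
    locMap R q q' hq (algebraMap R _ r) = algebraMap R _ r :=
  IsLocalization.map_eq _ _

theorem locMap_self (q : Ideal R) [q.IsPrime] (x : Localization.AtPrime q) :
    locMap R q q le_rfl x = x :=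
  IsLocalization.map_id x _

theorem locMap_mk' (q q' : Ideal R) [q.IsPrime] [q'.IsPrime] (hq : q' ≤ q) (r : R)
    (s : q.primeCompl) :
    locMap R q q' hq (IsLocalization.mk' _ r s) =
      IsLocalization.mk' _ r (⟨s, fun h => s.2 (hq h)⟩ : q'.primeCompl) :=
  IsLocalization.map_mk' _ _ _

theorem vmap_mk (p p' q q' : Ideal R) [q.IsPrime] [q'.IsPrime] (hq : q' ≤ q) (hp : p ≤ p')
    (x : Localization.AtPrime q) :
    vmap R p p' q q' hq hp (Ideal.Quotient.mk _ x) = Ideal.Quotient.mk _ (locMap R q q' hq x) :=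
  rfl

theorem vmap_injective (p q q' : Ideal R) [p.IsPrime] [q.IsPrime] [q'.IsPrime]
    (hp : p ≤ q') (hq : q' ≤ q) : Function.Injective (vmap R p p q q' hq le_rfl) := by
  refine (injective_iff_map_eq_zero _).mpr fun a ha => ?_
  obtain ⟨x, rfl⟩ := Ideal.Quotient.mk_surjective a
  obtain ⟨r, s, rfl⟩ := IsLocalization.exists_mk'_eq q.primeCompl x
  rw [vmap_mk, locMap_mk', Ideal.Quotient.eq_zero_iff_mem, IsLocalization.mk'_mem_iff] at ha
  have hr : r ∈ p := by
    rw [← IsLocalization.under_map_of_isPrime_disjoint q'.primeCompl (Localization.AtPrime q')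
      ‹_› (Ideal.disjoint_primeCompl_of_le hp)]
    exact ha
  rw [Ideal.Quotient.eq_zero_iff_mem, IsLocalization.mk'_mem_iff]
  exact Ideal.mem_map_of_mem _ hr

/-- For primes `p₁ ⊆ p₂ ⊆ p₁' ⊆ p₂'` of a valuation domain `R`, the square of canonical
maps between the rings `R_{p₂'}/p₁`, `R_{p₁'}/p₁`, `R_{p₂'}/p₂` and `R_{p₁'}/p₂` is a
pullback square of rings. -/
theorem stmt16 [IsDomain R] [ValuationRing R]
    (p₁ p₂ p₁' p₂' : Ideal R) [p₁.IsPrime] [p₂.IsPrime] [p₁'.IsPrime] [p₂'.IsPrime]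
    (h1 : p₁ ≤ p₂) (h2 : p₂ ≤ p₁') (h3 : p₁' ≤ p₂')
    (r₁ : Localization.AtPrime p₁' ⧸ p₁.map (algebraMap R (Localization.AtPrime p₁')))
    (r₂ : Localization.AtPrime p₂' ⧸ p₂.map (algebraMap R (Localization.AtPrime p₂')))
    (hcompat : vmap R p₁ p₂ p₁' p₁' le_rfl h1 r₁ = vmap R p₂ p₂ p₂' p₁' h3 le_rfl r₂) :
    ∃! r : Localization.AtPrime p₂' ⧸ p₁.map (algebraMap R (Localization.AtPrime p₂')),
      vmap R p₁ p₁ p₂' p₁' h3 le_rfl r = r₁ ∧ vmap R p₁ p₂ p₂' p₂' le_rfl h1 r = r₂ := by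
  obtain ⟨x₂, rfl⟩ := Ideal.Quotient.mk_surjective r₂
  obtain ⟨y₁, rfl⟩ := Ideal.Quotient.mk_surjective r₁
  rw [vmap_mk, vmap_mk, locMap_self, Ideal.Quotient.eq] at hcompat
  obtain ⟨b, hb, hby⟩ := ValuationRing.exists_algebraMap_eq_of_mem_map
    (Ideal.disjoint_primeCompl_of_le h2) hcompat
  have hlift₁ : vmap R p₁ p₁ p₂' p₁' h3 le_rfl
      (Ideal.Quotient.mk _ (x₂ + algebraMap R _ b)) = Ideal.Quotient.mk _ y₁ := by
    rw [vmap_mk, map_add, locMap_algebraMap, hby, add_sub_cancel]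
  have hlift₂ : vmap R p₁ p₂ p₂' p₂' le_rfl h1
      (Ideal.Quotient.mk _ (x₂ + algebraMap R _ b)) = Ideal.Quotient.mk _ x₂ := by
    rw [vmap_mk, locMap_self, Ideal.Quotient.eq, add_sub_cancel_left]
    exact Ideal.mem_map_of_mem _ hb
  exact ⟨_, ⟨hlift₁, hlift₂⟩, fun r hr =>
    vmap_injective R p₁ p₂' p₁' (h1.trans h2) h3 (hr.1.trans hlift₁.symm)⟩
end

section
/- Let R be a commutative ring of weak global dimension at most 1 such that Spec R contains an infinite strictly ascending chain of prime ideals p₀ ⊊ p₁ ⊊ p₂ ⊊ ⋯. Then there exists a prime ideal p of R such that pR_p is a nonzero idempotent ideal of R_p, i.e., (pR_p)² = pR_p ≠ 0. -/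
/-!
Weak global dimension at most one makes every ideal flat. Indeed, if
`P₂ → P₁ → P₀ → R ⧸ I → 0` is a projective resolution, the vanishing of `Tor₂(X, R ⧸ I)` says
that the image of `P₂` in `P₁` stays a submodule after tensoring with any `X`; so `P₁` modulo it,
the first syzygy of `R ⧸ I`, is flat, and a Schanuel-type comparison with
`0 → I → R → R ⧸ I → 0` transfers flatness to `I`.

By the equational criterion, the relation `y • x - x • y = 0` in a flat ideal `(x, y)` is
trivial, and in a local ring the identities this produces force `x ∣ y` or `y ∣ x`. So every
localization `R_P` is a (pre)valuation ring. Take `P = ⋃ pᵢ`: an element `x ∈ pᵢR_P` is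
divisible by any `y ∈ pᵢ₊₁R_P \ pᵢR_P`, with quotient in the prime `pᵢR_P`, hence
`x ∈ (PR_P)²`.
-/
open CategoryTheory TensorProduct

universe u

section Flatness

open LinearMap

instance Module.Flat.prod {R M N : Type*} [CommRing R] [AddCommGroup M] [Module R M]
    [AddCommGroup N] [Module R N] [Module.Flat R M] [Module.Flat R N] :
    Module.Flat R (M × N) := by
  rw [Module.Flat.iff_lTensor_injective']
  intro I
  have hcomm : (prodLeft R R M N R).toLinearMap ∘ₗ lTensor (M × N) I.subtype =
      (lTensor M I.subtype).prodMap (lTensor N I.subtype) ∘ₗ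
        (prodLeft R R M N I).toLinearMap := by
    ext <;> simp
  have hinj : Function.Injective
      ((prodLeft R R M N R).toLinearMap ∘ₗ lTensor (M × N) I.subtype) := by
    rw [hcomm, coe_comp]
    exact ((lTensor_preserves_injective_linearMap _ I.injective_subtype).prodMap
      (lTensor_preserves_injective_linearMap _ I.injective_subtype)).comp (LinearEquiv.injective _)
  exact Function.Injective.of_comp (f := prodLeft R R M N R) hinj

theorem Module.Flat.of_exact_of_projective {R K X P : Type*} [CommRing R]
    [AddCommGroup K] [Module R K] [AddCommGroup X] [Module R X] [AddCommGroup P] [Module R P]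
    [Module.Flat R K] [Module.Projective R P] {i : K →ₗ[R] X} {q : X →ₗ[R] P}
    (hi : Function.Injective i) (hq : Function.Surjective q) (hiq : Function.Exact i q) :
    Module.Flat R X := by
  obtain ⟨s, hs⟩ := Module.projective_lifting_property q LinearMap.id hq
  exact .of_linearEquiv (hiq.splitSurjectiveEquiv hi ⟨s, hs⟩).1

/- With `φ : M → R` lifting `π`, the sequence `0 → ker π → M × I → R → 0`, where the last map
is `(m, a) ↦ φ m - a`, splits; so `I` is a direct summand of `ker π × R`. -/
theorem Ideal.flat_of_flat_ker {R M : Type*} [CommRing R] [AddCommGroup M] [Module R M]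
    [Module.Projective R M] {I : Ideal R} {π : M →ₗ[R] R ⧸ I} (hπ : Function.Surjective π)
    [Module.Flat R (ker π)] : Module.Flat R I := by
  obtain ⟨φ, hφ⟩ := Module.projective_lifting_property I.mkQ π I.mkQ_surjective
  have hφπ (m : M) : Ideal.Quotient.mk I (φ m) = π m := LinearMap.congr_fun hφ m
  have hφK (k : ker π) : φ k ∈ I := by
    rw [← Ideal.Quotient.eq_zero_iff_mem, hφπ]
    exact k.2
  let i : ker π →ₗ[R] M × I :=
    (ker π).subtype.prod ((φ ∘ₗ (ker π).subtype).codRestrict I hφK)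
  let q : M × I →ₗ[R] R := φ ∘ₗ fst R M I - I.subtype ∘ₗ snd R M I
  have hi : Function.Injective i := fun a b h => Subtype.ext (congrArg Prod.fst h)
  have hq : Function.Surjective q := by
    intro r
    obtain ⟨m, hm⟩ := hπ (Ideal.Quotient.mk I r)
    have hmr : φ m - r ∈ I := by
      rw [← Ideal.Quotient.eq, hφπ, hm]
    exact ⟨(m, ⟨φ m - r, hmr⟩), by simp [q]⟩
  have hiq : Function.Exact i q := by
    rintro ⟨m, a⟩
    simp only [q, LinearMap.sub_apply, LinearMap.comp_apply, LinearMap.fst_apply,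
      LinearMap.snd_apply, Submodule.subtype_apply, sub_eq_zero]
    constructor
    · intro h
      have hm : m ∈ ker π := by
        rw [mem_ker, ← hφπ, h, Ideal.Quotient.eq_zero_iff_mem]
        exact a.2
      exact ⟨⟨m, hm⟩, Prod.ext rfl (Subtype.ext h)⟩
    · rintro ⟨k, hk⟩
      obtain ⟨rfl, rfl⟩ := Prod.ext_iff.mp hk
      rfl
  have := Module.Flat.of_exact_of_projective hi hq hiq
  exact .of_retract (inr R M I) (snd R M I) (snd_comp_inr R M I)

theorem lTensor_range_subtype_injective_of_exact {R : Type*} [CommRing R]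
    {X A₁ A₂ A₃ : Type*} [AddCommGroup X] [Module R X] [AddCommGroup A₁] [Module R A₁]
    [AddCommGroup A₂] [Module R A₂] [AddCommGroup A₃] [Module R A₃]
    {d₃ : A₃ →ₗ[R] A₂} {d₂ : A₂ →ₗ[R] A₁} (hd : d₂ ∘ₗ d₃ = 0)
    (hex : Function.Exact (lTensor X d₃) (lTensor X d₂)) :
    Function.Injective (lTensor X (range d₂).subtype) := by
  rw [injective_iff_map_eq_zero]
  intro ζ hζ
  obtain ⟨η, rfl⟩ := lTensor_surjective X d₂.surjective_rangeRestrict ζ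
  have hη : lTensor X d₂ η = 0 := by
    rwa [← lTensor_comp_apply, rangeRestrict, subtype_comp_codRestrict] at hζ
  obtain ⟨θ, rfl⟩ := (hex η).mp hη
  have hd' : d₂.rangeRestrict ∘ₗ d₃ = 0 := by
    ext a
    simpa using LinearMap.congr_fun hd a
  rw [← lTensor_comp_apply, hd', lTensor_zero, LinearMap.zero_apply]

/- A diagram chase in `I ⊗ Z → I ⊗ F → I ⊗ Ω` over `R ⊗ Z → R ⊗ F → R ⊗ Ω`: the obstruction
to injectivity of `I ⊗ Ω → R ⊗ Ω` lies in the kernel of `(R ⧸ I) ⊗ Z → (R ⧸ I) ⊗ F`. -/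
theorem Module.Flat.of_exact_of_lTensor_quotient_injective {R Z F Ω : Type*} [CommRing R]
    [AddCommGroup Z] [Module R Z] [AddCommGroup F] [Module R F] [AddCommGroup Ω] [Module R Ω]
    [Module.Flat R F] {g : Z →ₗ[R] F} {f : F →ₗ[R] Ω}
    (hgf : Function.Exact g f) (hf : Function.Surjective f)
    (hpure : ∀ J : Ideal R, Function.Injective (lTensor (R ⧸ J) g)) :
    Module.Flat R Ω := by
  rw [Module.Flat.iff_rTensor_injective']
  intro I
  rw [injective_iff_map_eq_zero]
  intro ξ hξ
  obtain ⟨η, rfl⟩ := lTensor_surjective I hf ξ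
  have hη : lTensor R f (rTensor F I.subtype η) = 0 := by
    rw [← LinearMap.comp_apply, lTensor_comp_rTensor, ← rTensor_comp_lTensor,
      LinearMap.comp_apply, hξ]
  obtain ⟨ζ, hζ⟩ := (_root_.lTensor_exact R hgf hf _).mp hη
  have hζI : lTensor (R ⧸ I) g (rTensor Z I.mkQ ζ) = 0 := by
    rw [← LinearMap.comp_apply, lTensor_comp_rTensor, ← rTensor_comp_lTensor,
      LinearMap.comp_apply, hζ, ← rTensor_comp_apply,
      (exact_subtype_mkQ I).linearMap_comp_eq_zero, rTensor_zero, LinearMap.zero_apply]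
  obtain ⟨ω, hω⟩ := (_root_.rTensor_exact Z (exact_subtype_mkQ I) I.mkQ_surjective ζ).mp
    (hpure I (hζI.trans (map_zero _).symm))
  have hηω : η = lTensor I g ω :=
    rTensor_preserves_injective_linearMap I.subtype I.injective_subtype <| by
      rw [← hζ, ← hω, ← LinearMap.comp_apply, ← LinearMap.comp_apply, lTensor_comp_rTensor,
        rTensor_comp_lTensor]
  rw [hηω, ← lTensor_comp_apply, hgf.linearMap_comp_eq_zero, lTensor_zero,
    LinearMap.zero_apply]

end Flatness

namespace WeakGlobalDimLE1

open Limits LinearMap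

variable {R : Type u} [CommRing R]

theorem exact_lTensor_resolution_at_two (hR : WeakGlobalDimLE1 R)
    {N : ModuleCat.{u} R} (P : ProjectiveResolution N) (X : ModuleCat.{u} R) :
    Function.Exact (lTensor X (P.complex.d 3 2).hom) (lTensor X (P.complex.d 2 1).hom) := by
  let F := (MonoidalCategory.tensoringLeft (ModuleCat.{u} R)).obj X
  let C := (F.mapHomologicalComplex (ComplexShape.down ℕ)).obj P.complex
  have hC : C.ExactAt 2 := by
    rw [HomologicalComplex.exactAt_iff_isZero_homology]
    exact (hR X N).of_iso (P.isoLeftDerivedObj F 2).symm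
  rw [HomologicalComplex.exactAt_iff' C 3 2 1 (by simp) (by simp)] at hC
  exact exact_iff.mpr hC.moduleCat_range_eq_ker.symm

theorem exists_surjective_flat_ker (hR : WeakGlobalDimLE1 R) (N : ModuleCat.{u} R) :
    ∃ (M : ModuleCat.{u} R) (π : M →ₗ[R] N), Module.Projective R M ∧
      Function.Surjective π ∧ Module.Flat R (ker π) := by
  obtain ⟨P⟩ := HasProjectiveResolution.out (Z := N)
  let e := (HomologicalComplex.singleObjXSelf (ComplexShape.down ℕ) 0 N).toLinearEquiv
  let π := e.toLinearMap ∘ₗ (P.π.f 0).hom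
  have hπ : Function.Surjective π :=
    e.surjective.comp ((ModuleCat.epi_iff_surjective _).mp inferInstance)
  have hex₀ : range (P.complex.d 1 0).hom = ker π := by
    rw [LinearEquiv.ker_comp]
    exact (ShortComplex.moduleCat_exact_iff_range_eq_ker _).mp P.exact₀
  have hex₁ : range (P.complex.d 2 1).hom = ker (P.complex.d 1 0).hom :=
    (ShortComplex.moduleCat_exact_iff_range_eq_ker _).mp <|
      (HomologicalComplex.exactAt_iff' P.complex 2 1 0 (by simp) (by simp)).mp
        (P.complex_exactAt_succ 0)
  let f := (P.complex.d 1 0).hom.codRestrict (ker π) fun y => hex₀ ▸ mem_range_self _ y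
  have hf : Function.Surjective f := by
    rintro ⟨x, hx⟩
    obtain ⟨y, rfl⟩ := hex₀ ▸ hx
    exact ⟨y, rfl⟩
  have hgf : Function.Exact (range (P.complex.d 2 1).hom).subtype f := by
    rw [exact_iff, Submodule.range_subtype, hex₁, ker_codRestrict]
  have hpure (J : Ideal R) :=
    lTensor_range_subtype_injective_of_exact
      (congrArg ModuleCat.Hom.hom (P.complex.d_comp_d 3 2 1))
      (hR.exact_lTensor_resolution_at_two P (ModuleCat.of R (R ⧸ J)))
  have : Module.Projective R (P.complex.X 1) :=
    (IsProjective.iff_projective _).mpr (P.projective 1)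
  exact ⟨_, π, (IsProjective.iff_projective _).mpr (P.projective 0), hπ,
    Module.Flat.of_exact_of_lTensor_quotient_injective hgf hf hpure⟩

theorem flat_ideal (hR : WeakGlobalDimLE1 R) (I : Ideal R) : Module.Flat R I := by
  obtain ⟨M, π, _, hπ, _⟩ := hR.exists_surjective_flat_ker (ModuleCat.of R (R ⧸ I))
  exact Ideal.flat_of_flat_ker hπ

end WeakGlobalDimLE1

/- The relation `y • x + (-x) • y = 0` in `(x, y)` is trivial; writing its witnesses as
combinations of `x` and `y` gives these identities. -/
theorem exists_eqns_of_flat_span_pair {R : Type*} [CommRing R] {x y : R}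
    [Module.Flat R (Ideal.span {x, y})] :
    ∃ s u v t : R, x = s * x + u * y ∧ y * s = x * v ∧ y * u = x * t := by
  let J := Ideal.span {x, y}
  have hx : x ∈ J := Ideal.subset_span (Set.mem_insert _ _)
  have hy : y ∈ J := Ideal.subset_span (Set.mem_insert_of_mem _ rfl)
  have hrel : ∑ i, ![y, -x] i • ![(⟨x, hx⟩ : J), ⟨y, hy⟩] i = 0 := by
    ext
    simp [mul_comm]
  obtain ⟨k, a, z, hz, ha⟩ := Module.Flat.isTrivialRelation_of_sum_smul_eq_zero hrel
  choose α β hαβ using fun j => Ideal.mem_span_pair.mp (z j).2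
  have hxz : x = (∑ j, a 0 j * α j) * x + (∑ j, a 0 j * β j) * y := by
    refine (congrArg Subtype.val (hz 0)).trans ?_
    rw [Submodule.coe_sum, Finset.sum_mul, Finset.sum_mul, ← Finset.sum_add_distrib]
    refine Finset.sum_congr rfl fun j _ => ?_
    rw [Submodule.coe_smul, smul_eq_mul, ← hαβ j]
    ring
  have hya (j : Fin k) : y * a 0 j = x * a 1 j := by
    simpa [← sub_eq_add_neg, sub_eq_zero] using ha j
  refine ⟨_, _, ∑ j, a 1 j * α j, ∑ j, a 1 j * β j, hxz, ?_, ?_⟩ <;>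
  · simp only [Finset.mul_sum, ← mul_assoc, hya]

theorem IsLocalRing.dvd_or_dvd_of_eqns {S : Type*} [CommRing S] [IsLocalRing S]
    {x y s u v t : S} (hx : x = s * x + u * y) (hys : y * s = x * v) (hyu : y * u = x * t) :
    x ∣ y ∨ y ∣ x := by
  by_cases hst : IsUnit (s + t)
  · rcases IsLocalRing.isUnit_or_isUnit_of_isUnit_add hst with hs | ht
    · exact Or.inl (hs.dvd_mul_right.mp ⟨v, hys⟩)
    · exact Or.inr (ht.dvd_mul_right.mp ⟨u, hyu.symm⟩)
  · have hunit : IsUnit (1 - (s + t)) :=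
      (IsLocalRing.isUnit_or_isUnit_one_sub_self (s + t)).resolve_left hst
    have hx0 : x * (1 - (s + t)) = 0 := by linear_combination hx + hyu
    exact Or.inr ⟨0, by rw [mul_zero, ← hunit.mul_left_eq_zero, hx0]⟩

theorem IsLocalization.preValuationRing_of_flat_span_pair {R : Type*} [CommRing R]
    (hflat : ∀ x y : R, Module.Flat R (Ideal.span {x, y})) (M : Submonoid R) (S : Type*)
    [CommRing S] [Algebra R S] [IsLocalization M S] [IsLocalRing S] : PreValuationRing S := by
  have hassoc (a : S) : ∃ r : R, Associated a (algebraMap R S r) := by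
    obtain ⟨⟨r, m⟩, h⟩ := IsLocalization.surj M a
    exact ⟨r, (IsLocalization.map_units S m).unit, h⟩
  refine PreValuationRing.iff_dvd_total.mpr ⟨fun a b => ?_⟩
  obtain ⟨x, hax⟩ := hassoc a
  obtain ⟨y, hby⟩ := hassoc b
  have := hflat x y
  obtain ⟨s, u, v, t, hx, hys, hyu⟩ := exists_eqns_of_flat_span_pair (x := x) (y := y)
  have hx' := congrArg (algebraMap R S) hx
  have hys' := congrArg (algebraMap R S) hys
  have hyu' := congrArg (algebraMap R S) hyu
  simp only [map_add, map_mul] at hx' hys' hyu'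
  rw [hax.dvd_iff_dvd_left, hax.dvd_iff_dvd_right, hby.dvd_iff_dvd_left, hby.dvd_iff_dvd_right]
  exact IsLocalRing.dvd_or_dvd_of_eqns hx' hys' hyu'

theorem PreValuationRing.exists_eq_mul_of_mem_of_notMem {S : Type*} [CommRing S]
    [PreValuationRing S] {Q : Ideal S} [Q.IsPrime] {x y : S} (hx : x ∈ Q) (hy : y ∉ Q) :
    ∃ c ∈ Q, x = y * c := by
  rcases ValuationRing.dvd_total x y with ⟨c, rfl⟩ | ⟨c, rfl⟩
  · exact absurd (Q.mul_mem_right c hx) hy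
  · exact ⟨c, (‹Q.IsPrime›.mem_or_mem hx).resolve_left hy, rfl⟩

theorem PreValuationRing.iSup_sq_eq_of_forall_exists_lt {S : Type*} [CommRing S]
    [PreValuationRing S] {ι : Sort*} (q : ι → Ideal S) (hq : ∀ i, (q i).IsPrime)
    (hlt : ∀ i, ∃ j, q i < q j) : (⨆ i, q i) ^ 2 = ⨆ i, q i := by
  refine le_antisymm (Ideal.pow_le_self two_ne_zero) (iSup_le fun i x hx => ?_)
  obtain ⟨j, hij⟩ := hlt i
  obtain ⟨y, hyj, hyi⟩ := SetLike.exists_of_lt hij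
  have := hq i
  obtain ⟨c, hc, rfl⟩ := exists_eq_mul_of_mem_of_notMem hx hyi
  rw [sq]
  exact Ideal.mul_mem_mul (le_iSup q j hyj) (le_iSup q i hc)

theorem Ideal.isPrime_iSup_of_directed {R : Type*} [CommRing R] {ι : Sort*} [Nonempty ι]
    (p : ι → Ideal R) (hdir : Directed (· ≤ ·) p) (hp : ∀ i, (p i).IsPrime) :
    (⨆ i, p i).IsPrime := by
  have hmem (x : R) : x ∈ ⨆ i, p i ↔ ∃ i, x ∈ p i := Submodule.mem_iSup_of_directed p hdir
  refine ⟨fun htop => ?_, fun {a b} hab => ?_⟩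
  · obtain ⟨i, hi⟩ := (hmem 1).mp (htop ▸ Submodule.mem_top)
    exact (hp i).ne_top ((Ideal.eq_top_iff_one _).mpr hi)
  · obtain ⟨i, hi⟩ := (hmem _).mp hab
    exact ((hp i).mem_or_mem hi).imp (fun ha => (hmem a).mpr ⟨i, ha⟩)
      fun hb => (hmem b).mpr ⟨i, hb⟩

theorem IsLocalization.map_lt_map_of_isPrime_disjoint {R S : Type*} [CommRing R] [CommRing S]
    [Algebra R S] (M : Submonoid R) [IsLocalization M S] {I J : Ideal R} (hI : I.IsPrime)
    (hIM : Disjoint (M : Set R) I) (hIJ : I < J) :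
    I.map (algebraMap R S) < J.map (algebraMap R S) := by
  refine lt_of_le_of_ne (Ideal.map_mono hIJ.le) fun heq => hIJ.not_ge ?_
  calc J ≤ (J.map (algebraMap R S)).comap (algebraMap R S) := Ideal.le_comap_map
    _ = I := by rw [← heq]; exact IsLocalization.under_map_of_isPrime_disjoint M S hI hIM

/-- If a commutative ring of weak global dimension at most one has an infinite strictly
ascending chain of primes, then some prime `p` has `pR_p` a nonzero idempotent ideal of
`R_p`. -/
theorem stmt19 (R : Type u) [CommRing R] (hR : WeakGlobalDimLE1 R)
    (p : ℕ → Ideal R) (hprime : ∀ i, (p i).IsPrime) (hchain : ∀ i, p i < p (i + 1)) :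
    ∃ (P : Ideal R) (hP : P.IsPrime),
      P.map (algebraMap R (Localization (P.primeCompl (hp := hP)))) ≠ ⊥ ∧
        P.map (algebraMap R (Localization (P.primeCompl (hp := hP)))) ^ 2 =
          P.map (algebraMap R (Localization (P.primeCompl (hp := hP)))) := by
  let P := ⨆ i, p i
  have hP : P.IsPrime := Ideal.isPrime_iSup_of_directed p
    (monotone_nat_of_le_succ fun i => (hchain i).le).directed_le hprime
  have := IsLocalization.preValuationRing_of_flat_span_pair (fun _ _ => hR.flat_ideal _)
    P.primeCompl (Localization.AtPrime P)
  let q (i : ℕ) := (p i).map (algebraMap R (Localization.AtPrime P))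
  have hdisj (i : ℕ) : Disjoint (P.primeCompl : Set R) (p i) :=
    Set.disjoint_left.mpr fun _ ha ha' => ha (le_iSup p i ha')
  have hq (i : ℕ) : (q i).IsPrime :=
    IsLocalization.isPrime_of_isPrime_disjoint _ _ _ (hprime i) (hdisj i)
  have hlt (i : ℕ) : q i < q (i + 1) :=
    IsLocalization.map_lt_map_of_isPrime_disjoint _ (hprime i) (hdisj i) (hchain i)
  have hPq : P.map (algebraMap R (Localization.AtPrime P)) = ⨆ i, q i := Ideal.map_iSup _ _
  refine ⟨P, hP, ?_, ?_⟩ <;> rw [hPq]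
  · exact ne_bot_of_gt ((bot_le.trans_lt (hlt 0)).trans_le (le_iSup q 1))
  · exact PreValuationRing.iSup_sq_eq_of_forall_exists_lt q hq fun i => ⟨i + 1, hlt i⟩
end
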